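/- Let n ≥ 1, L ≥ 2, ζ > 0, ε > 0, let A be a real n×n matrix, and on a probability space let (X_k), (U_k), (W_k) be ℝⁿ-valued random sequences satisfying X_{k+1} = A·X_k + U_k + W_k almost surely for all 1 ≤ k ≤ L−1. Let G := ∑_{k=1}^{L−1} X_k X_kᵀ and define the least-squares estimator Â := (∑_{k=1}^{L−1} (X_{k+1} − U_k)·X_kᵀ)·G⁻¹ whenever det(G) ≠ 0, and Â := 0 (the zero matrix) otherwise. Then, with ‖·‖_op the operator norm on real n×n matrices induced by the Euclidean norm on ℝⁿ, ℙ( ‖Â − A‖_op < ε ) ≥ ℙ( {G − ζ·L·I is positive semidefinite} ∩ {(1/(ζ·L))·∑_{k=1}^{L−1} ‖W_k X_kᵀ‖_op < ε} ). -/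

import Mathlib

/-!
On the event `G ⪰ ζL·I` the Gramian `G` is positive definite, so `Â` is given by the
least-squares formula, and substituting the dynamics gives `Â - A = (∑ Wₖ Xₖᵀ) G⁻¹`.
The excitation also bounds `‖G⁻¹‖` by `1/(ζL)`, since `ζL‖y‖² ≤ ⟪y, G y⟫ ≤ ‖y‖ ‖G y‖`.
Hence the event is almost surely contained in `{‖Â - A‖ < ε}`.
-/

open MeasureTheory Finset Matrix
open scoped Matrix.Norms.L2Operator RealInnerProductSpace

namespace Matrix

theorem sum_vecMulVec_eq_mul_add {ι κ R : Type*} [Fintype ι] [CommRing R] {s : Finset κ}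
    {A : Matrix ι ι R} {x y w : κ → ι → R} (h : ∀ k ∈ s, y k = A *ᵥ x k + w k) :
    ∑ k ∈ s, vecMulVec (y k) (x k) =
      A * ∑ k ∈ s, vecMulVec (x k) (x k) + ∑ k ∈ s, vecMulVec (w k) (x k) := by
  rw [mul_sum, ← sum_add_distrib]
  refine sum_congr rfl fun k hk => ?_
  rw [h k hk, add_vecMulVec, mul_vecMulVec]

variable {ι : Type*} [DecidableEq ι] {M : Matrix ι ι ℝ} {c : ℝ}

theorem posDef_of_posSemidef_sub_smul_one (hc : 0 < c) (h : (M - c • 1).PosSemidef) :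
    M.PosDef := by
  simpa using PosDef.posSemidef_add h (PosDef.one.smul hc)

variable [Fintype ι]

theorem mul_norm_le_norm_toEuclideanCLM_of_posSemidef_sub
    (h : (M - c • 1).PosSemidef) (x : EuclideanSpace ℝ ι) :
    c * ‖x‖ ≤ ‖toEuclideanCLM (𝕜 := ℝ) M x‖ := by
  have hquad : c * ‖x‖ ^ 2 ≤ ⟪x, toEuclideanCLM (𝕜 := ℝ) M x⟫ := by
    have := h.dotProduct_mulVec_nonneg x.ofLp
    rw [sub_mulVec, smul_mulVec, one_mulVec, dotProduct_sub, dotProduct_smul] at this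
    rw [EuclideanSpace.inner_eq_star_dotProduct, ofLp_toEuclideanCLM, ← real_inner_self_eq_norm_sq,
      EuclideanSpace.inner_eq_star_dotProduct]
    simp only [star_trivial, smul_eq_mul] at this ⊢
    rw [dotProduct_comm (M *ᵥ _)]
    linarith
  have hCS : c * ‖x‖ ^ 2 ≤ ‖x‖ * ‖toEuclideanCLM (𝕜 := ℝ) M x‖ :=
    hquad.trans (real_inner_le_norm _ _)
  rcases (norm_nonneg x).eq_or_lt with hx | hx
  · rw [← hx, mul_zero]
    exact norm_nonneg _
  · nlinarith

theorem l2_opNorm_inv_le_of_posSemidef_sub (hc : 0 < c) (h : (M - c • 1).PosSemidef) :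
    ‖M⁻¹‖ ≤ c⁻¹ := by
  have hM : IsUnit M.det := (posDef_of_posSemidef_sub_smul_one hc h).det_pos.ne'.isUnit
  rw [← l2_opNorm_toEuclideanCLM]
  refine ContinuousLinearMap.opNorm_le_bound _ (by positivity) fun x => ?_
  have := mul_norm_le_norm_toEuclideanCLM_of_posSemidef_sub h (toEuclideanCLM (𝕜 := ℝ) M⁻¹ x)
  rw [← mul_apply_eq_comp, ← map_mul, mul_nonsing_inv _ hM, map_one, one_apply_eq_self] at this
  rw [inv_mul_eq_div, le_div_iff₀' hc]
  exact this

theorem l2_opNorm_leastSquares_sub_le {κ : Type*} {s : Finset κ} {A : Matrix ι ι ℝ}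
    {x y w : κ → ι → ℝ} (hc : 0 < c)
    (hG : (∑ k ∈ s, vecMulVec (x k) (x k) - c • 1).PosSemidef)
    (h : ∀ k ∈ s, y k = A *ᵥ x k + w k) :
    ‖(∑ k ∈ s, vecMulVec (y k) (x k)) * (∑ k ∈ s, vecMulVec (x k) (x k))⁻¹ - A‖ ≤
      c⁻¹ * ∑ k ∈ s, ‖vecMulVec (w k) (x k)‖ := by
  set G := ∑ k ∈ s, vecMulVec (x k) (x k)
  set S := ∑ k ∈ s, vecMulVec (w k) (x k)
  have hG_det : IsUnit G.det := (posDef_of_posSemidef_sub_smul_one hc hG).det_pos.ne'.isUnit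
  calc _ = ‖S * G⁻¹‖ := by
        rw [sum_vecMulVec_eq_mul_add h, add_mul, mul_assoc, mul_nonsing_inv _ hG_det, mul_one,
          add_sub_cancel_left]
    _ ≤ ‖S‖ * ‖G⁻¹‖ := l2_opNorm_mul _ _
    _ ≤ (∑ k ∈ s, ‖vecMulVec (w k) (x k)‖) * c⁻¹ :=
        mul_le_mul (norm_sum_le _ _) (l2_opNorm_inv_le_of_posSemidef_sub hc hG) (norm_nonneg _)
          (sum_nonneg fun _ _ => norm_nonneg _)
    _ = _ := mul_comm _ _

end Matrix

theorem ls_attack_deception_lower_bound_vector_general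
    {Ω : Type*} [MeasurableSpace Ω] (P : Measure Ω)
    (n L : ℕ) (hL : 2 ≤ L) (ζ ε : ℝ) (hζ : 0 < ζ)
    (A : Matrix (Fin n) (Fin n) ℝ) (X U W : ℕ → Ω → Fin n → ℝ)
    (hdyn : ∀ᵐ ω ∂P, ∀ k, 1 ≤ k → k ≤ L - 1 →
      X (k + 1) ω = A *ᵥ X k ω + U k ω + W k ω)
    (Ahat : Ω → Matrix (Fin n) (Fin n) ℝ)
    (hAhat : ∀ ω, Ahat ω =
      if (∑ k ∈ Icc 1 (L - 1), vecMulVec (X k ω) (X k ω)).det ≠ 0 then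
        (∑ k ∈ Icc 1 (L - 1), vecMulVec (X (k + 1) ω - U k ω) (X k ω))
          * (∑ k ∈ Icc 1 (L - 1), vecMulVec (X k ω) (X k ω))⁻¹
      else 0) :
    P ({ω | ((∑ k ∈ Icc 1 (L - 1), vecMulVec (X k ω) (X k ω))
            - (ζ * L) • (1 : Matrix (Fin n) (Fin n) ℝ)).PosSemidef}
        ∩ {ω | (1 / (ζ * L)) * ∑ k ∈ Icc 1 (L - 1), ‖vecMulVec (W k ω) (X k ω)‖ < ε})
      ≤ P {ω | ‖Ahat ω - A‖ < ε} := by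
  have hζL : 0 < ζ * L := mul_pos hζ (by positivity)
  refine measure_mono_ae ?_
  filter_upwards [hdyn] with ω hω ⟨hG, hnoise⟩
  have hG_det := (posDef_of_posSemidef_sub_smul_one hζL hG).det_pos.ne'
  have hresid : ∀ k ∈ Icc 1 (L - 1), X (k + 1) ω - U k ω = A *ᵥ X k ω + W k ω := by
    intro k hk
    rw [hω k (mem_Icc.mp hk).1 (mem_Icc.mp hk).2]
    abel
  show ‖Ahat ω - A‖ < ε
  rw [hAhat ω, if_pos hG_det]
  exact (l2_opNorm_leastSquares_sub_le hζL hG hresid).trans_lt (by rwa [one_div] at hnoise)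

/-- Probabilistic content of Theorem 3 of the paper: the probability that the
least-squares estimate of the open-loop gain matrix is within `ε` (in the
Euclidean-induced operator norm) is at least the probability that the Gramian is
`ζ·L`-excited and the noise-Gramian bound is below `ε`. -/
theorem ls_attack_deception_lower_bound_vector
    {Ω : Type*} [MeasurableSpace Ω] (P : Measure Ω) [IsProbabilityMeasure P]
    (n L : ℕ) (hn : 1 ≤ n) (hL : 2 ≤ L) (ζ ε : ℝ) (hζ : 0 < ζ) (hε : 0 < ε)
    (A : Matrix (Fin n) (Fin n) ℝ) (X U W : ℕ → Ω → Fin n → ℝ)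
    (hdyn : ∀ᵐ ω ∂P, ∀ k, 1 ≤ k → k ≤ L - 1 →
      X (k + 1) ω = A *ᵥ X k ω + U k ω + W k ω)
    (Ahat : Ω → Matrix (Fin n) (Fin n) ℝ)
    (hAhat : ∀ ω, Ahat ω =
      if (∑ k ∈ Icc 1 (L - 1), vecMulVec (X k ω) (X k ω)).det ≠ 0 then
        (∑ k ∈ Icc 1 (L - 1), vecMulVec (X (k + 1) ω - U k ω) (X k ω))
          * (∑ k ∈ Icc 1 (L - 1), vecMulVec (X k ω) (X k ω))⁻¹
      else 0) :
    P ({ω | ((∑ k ∈ Icc 1 (L - 1), vecMulVec (X k ω) (X k ω))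
            - (ζ * L) • (1 : Matrix (Fin n) (Fin n) ℝ)).PosSemidef}
        ∩ {ω | (1 / (ζ * L)) * ∑ k ∈ Icc 1 (L - 1), ‖vecMulVec (W k ω) (X k ω)‖ < ε})
      ≤ P {ω | ‖Ahat ω - A‖ < ε} :=
  ls_attack_deception_lower_bound_vector_general P n L hL ζ ε hζ A X U W hdyn Ahat hAhat
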